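/- Partition-sum pole cancellation: in the bilinear sum S(w̄) = Σ_{w̄ = w̄_I ∪ w̄_II, #w̄_I = b} K_b(s̄-c | w̄_I) K_a(w̄_II | t̄) K_b(ȳ | w̄_I) · ∏_{u∈w̄_I, v∈w̄_II} f(u,v), the apparent simple poles at wⱼ = w_k (j ≠ k) coming from the factors f(u,v) cancel: the residue of S at wⱼ = w_k vanishes, because the contributions of the partition with wⱼ ∈ w̄_I, w_k ∈ w̄_II and the partition with wⱼ ∈ w̄_II, w_k ∈ w̄_I (other elements distributed identically) are opposite. -/
import Mathlib


open Finset Filter Topology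

noncomputable def gf (c x y : ℂ) : ℂ := c / (x - y)
noncomputable def ff (c x y : ℂ) : ℂ := (x - y + c) / (x - y)
noncomputable def hf (c x y : ℂ) : ℂ := (x - y + c) / c
noncomputable def tf (c x y : ℂ) : ℂ := c ^ 2 / ((x - y) * (x - y + c))

/-- The Izergin determinant `K_n(x|y) = Δ'_n(x) Δ_n(y) ∏_{j,k} h(x_j,y_k) det[t(x_j,y_k)]`. -/
noncomputable def K (c : ℂ) (n : ℕ) (x y : Fin n → ℂ) : ℂ :=
  (∏ j : Fin n, ∏ k ∈ Finset.univ.filter (fun k => k < j), gf c (x j) (x k)) *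
  (∏ j : Fin n, ∏ k ∈ Finset.univ.filter (fun k => j < k), gf c (y j) (y k)) *
  (∏ j : Fin n, ∏ k : Fin n, hf c (x j) (y k)) *
  Matrix.det (Matrix.of fun j k => tf c (x j) (y k))

section Perm

variable {n : ℕ}

/-- Set of ordered pairs. -/
def PS (n : ℕ) : Finset (Fin n × Fin n) :=
  Finset.univ.filter (fun p => p.1 < p.2)

lemma prod_prod_filter {M : Type*} [CommMonoid M] (r : Fin n → Fin n → Prop) [DecidableRel r]
    (f : Fin n → Fin n → M) :
    (∏ j : Fin n, ∏ k ∈ Finset.univ.filter (fun k => r j k), f j k)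
      = ∏ p ∈ (Finset.univ : Finset (Fin n × Fin n)).filter (fun p => r p.1 p.2), f p.1 p.2 := by
  calc (∏ j : Fin n, ∏ k ∈ Finset.univ.filter (fun k => r j k), f j k)
      = ∏ j : Fin n, ∏ k : Fin n, if r j k then f j k else 1 :=
        Finset.prod_congr rfl fun j _ => Finset.prod_filter _ _
    _ = ∏ p ∈ (Finset.univ ×ˢ Finset.univ : Finset (Fin n × Fin n)),
          (if r p.1 p.2 then f p.1 p.2 else 1) := (Finset.prod_product' _ _ _).symm
    _ = ∏ p ∈ (Finset.univ : Finset (Fin n × Fin n)), (if r p.1 p.2 then f p.1 p.2 else 1) := by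
        rw [Finset.univ_product_univ]
    _ = _ := (Finset.prod_filter _ _).symm

/-- The y-side double product in pair form. -/
lemma yprod_eq (g : Fin n → Fin n → ℂ) :
    (∏ j : Fin n, ∏ k ∈ Finset.univ.filter (fun k => j < k), g j k)
      = ∏ p ∈ PS n, g p.1 p.2 := prod_prod_filter _ _

/-- The x-side double product in pair form. -/
lemma xprod_eq (g : Fin n → Fin n → ℂ) :
    (∏ j : Fin n, ∏ k ∈ Finset.univ.filter (fun k => k < j), g j k)
      = ∏ p ∈ PS n, g p.2 p.1 := by
  rw [prod_prod_filter (fun j k => k < j) g]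
  refine Finset.prod_nbij' (fun p => (p.2, p.1)) (fun p => (p.2, p.1)) ?_ ?_ ?_ ?_ ?_ <;>
    simp [PS]

noncomputable def Dprod (v : Fin n → ℂ) : ℂ := ∏ p ∈ PS n, (v p.2 - v p.1)

lemma Dprod_eq_det (v : Fin n → ℂ) : Dprod v = (Matrix.vandermonde v).det := by
  have h := prod_prod_filter (M := ℂ) (fun i j => i < j) (fun i j => v j - v i)
  rw [Matrix.det_vandermonde, Dprod]
  simp only [PS]
  rw [← h]
  exact Finset.prod_congr rfl fun i _ => by rw [← Finset.filter_lt_eq_Ioi]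

lemma Dprod_comp_perm (v : Fin n → ℂ) (σ : Equiv.Perm (Fin n)) :
    Dprod (v ∘ σ) = ((Equiv.Perm.sign σ : ℤ) : ℂ) * Dprod v := by
  rw [Dprod_eq_det, Dprod_eq_det]
  have : Matrix.vandermonde (v ∘ σ) = (Matrix.vandermonde v).submatrix σ id := by
    ext i jj; simp [Matrix.vandermonde]
  rw [this, Matrix.det_permute]
  try norm_cast

lemma Dprod'_comp_perm (v : Fin n → ℂ) (σ : Equiv.Perm (Fin n)) :
    (∏ p ∈ PS n, (v (σ p.1) - v (σ p.2)))
      = ((Equiv.Perm.sign σ : ℤ) : ℂ) * ∏ p ∈ PS n, (v p.1 - v p.2) := by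
  have h1 : ∀ u : Fin n → ℂ, (∏ p ∈ PS n, (u p.1 - u p.2))
      = (-1 : ℂ) ^ (PS n).card * Dprod u := by
    intro u
    rw [Dprod, ← Finset.prod_const, ← Finset.prod_mul_distrib]
    exact Finset.prod_congr rfl fun p _ => by ring
  have := h1 (v ∘ σ)
  simp only [Function.comp] at this
  rw [this, h1 v, Dprod_comp_perm]
  ring

lemma gfprod_comp_perm (c : ℂ) (v : Fin n → ℂ) (σ : Equiv.Perm (Fin n)) :
    (∏ p ∈ PS n, gf c (v (σ p.1)) (v (σ p.2)))
      = ((Equiv.Perm.sign σ : ℤ) : ℂ) * ∏ p ∈ PS n, gf c (v p.1) (v p.2) := by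
  have key : ∀ u : Fin n → ℂ, (∏ p ∈ PS n, gf c (u p.1) (u p.2))
      = (∏ _p ∈ PS n, c) / ∏ p ∈ PS n, (u p.1 - u p.2) := by
    intro u; rw [← Finset.prod_div_distrib]; rfl
  have h1 := key (v ∘ σ)
  simp only [Function.comp] at h1
  rw [h1, key v, Dprod'_comp_perm _ σ]
  rcases Int.units_eq_one_or (Equiv.Perm.sign σ) with h | h <;> rw [h] <;> push_cast <;>
    simp [div_neg]

lemma sign_sq (σ : Equiv.Perm (Fin n)) :
    ((Equiv.Perm.sign σ : ℤ) : ℂ) * ((Equiv.Perm.sign σ : ℤ) : ℂ) = 1 := by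
  rcases Int.units_eq_one_or (Equiv.Perm.sign σ) with h | h <;> rw [h] <;> norm_num

lemma K_y_perm (c : ℂ) (x y : Fin n → ℂ) (σ : Equiv.Perm (Fin n)) :
    K c n x (y ∘ σ) = K c n x y := by
  unfold K
  have h2 : (∏ j : Fin n, ∏ k ∈ Finset.univ.filter (fun k => j < k), gf c (y (σ j)) (y (σ k)))
      = ((Equiv.Perm.sign σ : ℤ) : ℂ) *
        ∏ j : Fin n, ∏ k ∈ Finset.univ.filter (fun k => j < k), gf c (y j) (y k) := by
    rw [yprod_eq (fun j k => gf c (y (σ j)) (y (σ k))), yprod_eq (fun j k => gf c (y j) (y k))]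
    exact gfprod_comp_perm c y σ
  have h3 : (∏ j : Fin n, ∏ k : Fin n, hf c (x j) (y (σ k)))
      = ∏ j : Fin n, ∏ k : Fin n, hf c (x j) (y k) :=
    Finset.prod_congr rfl fun j _ => Equiv.prod_comp σ (fun k => hf c (x j) (y k))
  have h4 : (Matrix.of fun j k => tf c (x j) (y (σ k))).det
      = ((Equiv.Perm.sign σ : ℤ) : ℂ) * (Matrix.of fun j k => tf c (x j) (y k)).det := by
    have : (Matrix.of fun j k => tf c (x j) (y (σ k)))
        = (Matrix.of fun j k => tf c (x j) (y k)).submatrix id σ := by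
      ext i jj; simp
    rw [this, Matrix.det_permute']
    try norm_cast
  simp only [Function.comp]
  rw [h2, h3, h4]
  calc _ = (((Equiv.Perm.sign σ : ℤ) : ℂ) * ((Equiv.Perm.sign σ : ℤ) : ℂ)) *
      ((∏ j : Fin n, ∏ k ∈ Finset.univ.filter (fun k => k < j), gf c (x j) (x k)) *
      (∏ j : Fin n, ∏ k ∈ Finset.univ.filter (fun k => j < k), gf c (y j) (y k)) *
      (∏ j : Fin n, ∏ k : Fin n, hf c (x j) (y k)) *
      (Matrix.of fun j k => tf c (x j) (y k)).det) := by ring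
  _ = _ := by rw [sign_sq σ]; ring

lemma K_x_perm (c : ℂ) (x y : Fin n → ℂ) (σ : Equiv.Perm (Fin n)) :
    K c n (x ∘ σ) y = K c n x y := by
  unfold K
  have h1 : (∏ j : Fin n, ∏ k ∈ Finset.univ.filter (fun k => k < j), gf c (x (σ j)) (x (σ k)))
      = ((Equiv.Perm.sign σ : ℤ) : ℂ) *
        ∏ j : Fin n, ∏ k ∈ Finset.univ.filter (fun k => k < j), gf c (x j) (x k) := by
    rw [xprod_eq (fun j k => gf c (x (σ j)) (x (σ k))), xprod_eq (fun j k => gf c (x j) (x k))]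
    have key : ∀ u : Fin n → ℂ, (∏ p ∈ PS n, gf c (u p.2) (u p.1))
        = (∏ _p ∈ PS n, c) / ∏ p ∈ PS n, (u p.2 - u p.1) := by
      intro u; rw [← Finset.prod_div_distrib]; rfl
    have h1 := key (x ∘ σ)
    simp only [Function.comp] at h1
    rw [h1, key x]
    have : (∏ p ∈ PS n, (x (σ p.2) - x (σ p.1)))
        = ((Equiv.Perm.sign σ : ℤ) : ℂ) * ∏ p ∈ PS n, (x p.2 - x p.1) :=
      Dprod_comp_perm x σ
    rw [this]
    rcases Int.units_eq_one_or (Equiv.Perm.sign σ) with h | h <;> rw [h] <;> push_cast <;>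
      simp [div_neg]
  have h3 : (∏ j : Fin n, ∏ k : Fin n, hf c (x (σ j)) (y k))
      = ∏ j : Fin n, ∏ k : Fin n, hf c (x j) (y k) :=
    Equiv.prod_comp σ (fun j => ∏ k : Fin n, hf c (x j) (y k))
  have h4 : (Matrix.of fun j k => tf c (x (σ j)) (y k)).det
      = ((Equiv.Perm.sign σ : ℤ) : ℂ) * (Matrix.of fun j k => tf c (x j) (y k)).det := by
    have : (Matrix.of fun j k => tf c (x (σ j)) (y k))
        = (Matrix.of fun j k => tf c (x j) (y k)).submatrix σ id := by
      ext i jj; simp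
    rw [this, Matrix.det_permute]
    try norm_cast
  simp only [Function.comp]
  rw [h1, h3, h4]
  calc _ = (((Equiv.Perm.sign σ : ℤ) : ℂ) * ((Equiv.Perm.sign σ : ℤ) : ℂ)) *
      ((∏ j : Fin n, ∏ k ∈ Finset.univ.filter (fun k => k < j), gf c (x j) (x k)) *
      (∏ j : Fin n, ∏ k ∈ Finset.univ.filter (fun k => j < k), gf c (y j) (y k)) *
      (∏ j : Fin n, ∏ k : Fin n, hf c (x j) (y k)) *
      (Matrix.of fun j k => tf c (x j) (y k)).det) := by ring
  _ = _ := by rw [sign_sq σ]; ring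

end Perm

section Blocks

variable {l : Filter ℂ} {f g : ℂ → ℂ} {F G c : ℂ}

lemma tendsto_gf (h1 : Tendsto f l (𝓝 F)) (h2 : Tendsto g l (𝓝 G)) (h : F ≠ G) :
    Tendsto (fun z => gf c (f z) (g z)) l (𝓝 (gf c F G)) :=
  tendsto_const_nhds.div (h1.sub h2) (sub_ne_zero.2 h)

lemma tendsto_ff (h1 : Tendsto f l (𝓝 F)) (h2 : Tendsto g l (𝓝 G)) (h : F ≠ G) :
    Tendsto (fun z => ff c (f z) (g z)) l (𝓝 (ff c F G)) :=
  ((h1.sub h2).add tendsto_const_nhds).div (h1.sub h2) (sub_ne_zero.2 h)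

lemma tendsto_hf (h1 : Tendsto f l (𝓝 F)) (h2 : Tendsto g l (𝓝 G)) :
    Tendsto (fun z => hf c (f z) (g z)) l (𝓝 (hf c F G)) :=
  ((h1.sub h2).add tendsto_const_nhds).div_const c

lemma tendsto_tf (h1 : Tendsto f l (𝓝 F)) (h2 : Tendsto g l (𝓝 G)) (h : F - G ≠ 0)
    (h' : F - G + c ≠ 0) :
    Tendsto (fun z => tf c (f z) (g z)) l (𝓝 (tf c F G)) :=
  tendsto_const_nhds.div ((h1.sub h2).mul ((h1.sub h2).add tendsto_const_nhds))
    (mul_ne_zero h h')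

lemma tendsto_det {ι : Type*} [Fintype ι] [DecidableEq ι] {f : ℂ → Matrix ι ι ℂ}
    {M : Matrix ι ι ℂ} (h : ∀ i j, Tendsto (fun z => f z i j) l (𝓝 (M i j))) :
    Tendsto (fun z => (f z).det) l (𝓝 M.det) := by
  simp only [Matrix.det_apply, Units.smul_def, zsmul_eq_mul]
  exact tendsto_finset_sum _ fun σ _ =>
    tendsto_const_nhds.mul (tendsto_finset_prod _ fun i _ => h _ _)

lemma tendsto_z {d : ℂ} : Tendsto (fun z : ℂ => z) (𝓝[≠] d) (𝓝 d) :=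
  tendsto_id.mono_right nhdsWithin_le_nhds

lemma update_coord_tendsto {n : ℕ} (y : Fin n → ℂ) (p : Fin n) (d : ℂ) (i : Fin n) :
    Tendsto (fun z => Function.update y p z i) (𝓝[≠] d) (𝓝 (Function.update y p d i)) := by
  simp only [Function.update_apply]
  split_ifs
  · exact tendsto_z
  · exact tendsto_const_nhds

end Blocks

section Limits

variable {n : ℕ}

/-- Pair distinctness of updated vector off the special pair. -/
lemma updated_ne {y : Fin n → ℂ} {p q : Fin n} {d : ℂ} (hpq : p ≠ q) (hd : y q = d)
    (hinj : ∀ i i', i ≠ i' → i ≠ p → i' ≠ p → y i ≠ y i')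
    {pr : Fin n × Fin n} (hpr : pr ∈ (PS n).erase (if p < q then (p, q) else (q, p))) :
    Function.update y p d pr.1 ≠ Function.update y p d pr.2 := by
  obtain ⟨a, b⟩ := pr
  have hne : (a, b) ≠ (if p < q then (p, q) else (q, p)) := Finset.ne_of_mem_erase hpr
  have hab : a < b := by
    have := Finset.mem_of_mem_erase hpr
    simpa [PS] using this
  have hab' : a ≠ b := ne_of_lt hab
  by_cases hap : a = p
  · have hbp : b ≠ p := by rw [← hap]; exact Ne.symm hab'
    have hbq : b ≠ q := by
      intro hbq
      have hpq' : p < q := by rw [← hap, ← hbq]; exact hab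
      exact hne (by simp [hap, hbq, if_pos hpq'])
    have va : Function.update y p d a = d := by rw [hap]; simp
    have vb : Function.update y p d b = y b := Function.update_of_ne hbp _ _
    rw [va, vb, ← hd]
    exact hinj q b (Ne.symm hbq) (Ne.symm hpq) hbp
  · by_cases hbp : b = p
    · have haq : a ≠ q := by
        intro haq
        have hqp' : q < p := by rw [← haq, ← hbp]; exact hab
        exact hne (by simp [haq, hbp, if_neg (asymm hqp')])
      have va : Function.update y p d a = y a := Function.update_of_ne hap _ _
      have vb : Function.update y p d b = d := by rw [hbp]; simp
      rw [va, vb, ← hd]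
      exact hinj a q haq hap (Ne.symm hpq)
    · rw [Function.update_of_ne hap, Function.update_of_ne hbp]
      exact hinj a b hab' hap hbp

/-- The y-side pair factor extraction. -/
lemma yprod_extract (c : ℂ) (Y : Fin n → ℂ) {p q : Fin n} (hpq : p ≠ q) :
    (∏ j : Fin n, ∏ k ∈ Finset.univ.filter (fun k => j < k), gf c (Y j) (Y k))
      = gf c (Y (if p < q then (p, q) else (q, p)).1) (Y (if p < q then (p, q) else (q, p)).2) *
        ∏ pr ∈ (PS n).erase (if p < q then (p, q) else (q, p)), gf c (Y pr.1) (Y pr.2) := by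
  rw [yprod_eq (fun j k => gf c (Y j) (Y k))]
  refine (Finset.mul_prod_erase _ _ ?_).symm
  rcases hpq.lt_or_gt with h | h
  · simp [PS, if_pos h, h]
  · have : ¬ p < q := asymm h
    simp [PS, if_neg this, h]

/-- The x-side pair factor extraction. -/
lemma xprod_extract (c : ℂ) (X : Fin n → ℂ) {p q : Fin n} (hpq : p ≠ q) :
    (∏ j : Fin n, ∏ k ∈ Finset.univ.filter (fun k => k < j), gf c (X j) (X k))
      = gf c (X (if p < q then (p, q) else (q, p)).2) (X (if p < q then (p, q) else (q, p)).1) *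
        ∏ pr ∈ (PS n).erase (if p < q then (p, q) else (q, p)), gf c (X pr.2) (X pr.1) := by
  rw [xprod_eq (fun j k => gf c (X j) (X k))]
  refine (Finset.mul_prod_erase _ _ ?_).symm
  rcases hpq.lt_or_gt with h | h
  · simp [PS, if_pos h, h]
  · have : ¬ p < q := asymm h
    simp [PS, if_neg this, h]

end Limits

section MainLimits

variable {n : ℕ}

lemma xi_dc {xi d c : ℂ} (h : xi ≠ d - c) : xi - d + c ≠ 0 := by
  intro h0; apply h; linear_combination h0

lemma ym_dc {ym d c : ℂ} (h : ym ≠ d + c) : d - ym + c ≠ 0 := by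
  intro h0; apply h; linear_combination -h0

lemma tendstoA_y (c : ℂ) (x y : Fin n → ℂ) (p q : Fin n) (hpq : p ≠ q) (d : ℂ)
    (hd : y q = d)
    (hinj : ∀ i i', i ≠ i' → i ≠ p → i' ≠ p → y i ≠ y i')
    (hx : ∀ i, x i ≠ d ∧ x i ≠ d - c) :
    Tendsto (fun z => (z - d) * K c n x (Function.update y p z)) (𝓝[≠] d) (𝓝 0) := by
  classical
  set e : Fin n × Fin n := if p < q then (p, q) else (q, p) with he
  set sc : ℂ := if p < q then c else -c with hsc
  set GX : ℂ := ∏ j : Fin n, ∏ k ∈ Finset.univ.filter (fun k => k < j), gf c (x j) (x k) with hGX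
  set R : ℂ → ℂ := fun z =>
    ∏ pr ∈ (PS n).erase e, gf c (Function.update y p z pr.1) (Function.update y p z pr.2) with hR
  set H : ℂ → ℂ := fun z =>
    ∏ j : Fin n, ∏ k : Fin n, hf c (x j) (Function.update y p z k) with hH
  set D : ℂ → ℂ := fun z =>
    (Matrix.of fun i m => tf c (x i) (Function.update y p z m)).det with hD
  have key : ∀ z : ℂ, z ≠ d →
      (z - d) * K c n x (Function.update y p z) = (GX * sc) * (R z * (H z * D z)) := by
    intro z hz
    have hzd : z - d ≠ 0 := sub_ne_zero.2 hz
    have hdz : d - z ≠ 0 := sub_ne_zero.2 (Ne.symm hz)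
    rw [K, yprod_extract c (Function.update y p z) hpq, ← he]
    have hfac : (z - d) *
        gf c (Function.update y p z e.1) (Function.update y p z e.2) = sc := by
      rcases hpq.lt_or_gt with h | h
      · rw [hsc, if_pos h, he, if_pos h]
        simp only [gf]
        rw [Function.update_self, Function.update_of_ne (Ne.symm hpq), hd]
        field_simp
      · have h' : ¬ p < q := asymm h
        rw [hsc, if_neg h', he, if_neg h']
        simp only [gf]
        rw [Function.update_self, Function.update_of_ne (Ne.symm hpq), hd]
        field_simp
        ring
    calc (z - d) * (GX *
          (gf c (Function.update y p z e.1) (Function.update y p z e.2) * R z) * H z * D z)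
        = ((z - d) * gf c (Function.update y p z e.1) (Function.update y p z e.2)) *
            (GX * (R z * (H z * D z))) := by ring
      _ = (GX * sc) * (R z * (H z * D z)) := by rw [hfac]; ring
  have hRt : Tendsto R (𝓝[≠] d) (𝓝 (R d)) := by
    apply tendsto_finset_prod
    intro pr hpr
    exact tendsto_gf (update_coord_tendsto y p d pr.1) (update_coord_tendsto y p d pr.2)
      (updated_ne hpq hd hinj hpr)
  have hHt : Tendsto H (𝓝[≠] d) (𝓝 (H d)) := by
    apply tendsto_finset_prod
    intro jj _
    exact tendsto_finset_prod _ fun kk _ =>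
      tendsto_hf tendsto_const_nhds (update_coord_tendsto y p d kk)
  have hDt : Tendsto D (𝓝[≠] d) (𝓝 (D d)) := by
    apply tendsto_det
    intro i m
    by_cases hm : m = p
    · subst hm
      simp only [Matrix.of_apply, Function.update_self]
      exact tendsto_tf tendsto_const_nhds tendsto_z (sub_ne_zero.2 (hx i).1) (xi_dc (hx i).2)
    · simp only [Matrix.of_apply, Function.update_of_ne hm]
      exact tendsto_const_nhds
  have hDd : D d = 0 := by
    apply Matrix.det_zero_of_column_eq hpq
    intro i
    simp only [Matrix.of_apply, Function.update_self, Function.update_of_ne (Ne.symm hpq), hd]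
  have hlim : Tendsto (fun z => (GX * sc) * (R z * (H z * D z))) (𝓝[≠] d)
      (𝓝 ((GX * sc) * (R d * (H d * D d)))) :=
    tendsto_const_nhds.mul (hRt.mul (hHt.mul hDt))
  have hev : (fun z => (GX * sc) * (R z * (H z * D z)))
      =ᶠ[𝓝[≠] d] (fun z => (z - d) * K c n x (Function.update y p z)) :=
    eventually_mem_nhdsWithin.mono fun z hz => (key z hz).symm
  have := hlim.congr' hev
  rw [hDd] at this
  simpa using this

lemma tendstoA_x (c : ℂ) (x y : Fin n → ℂ) (p q : Fin n) (hpq : p ≠ q) (d : ℂ)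
    (hd : x q = d)
    (hinj : ∀ i i', i ≠ i' → i ≠ p → i' ≠ p → x i ≠ x i')
    (hy : ∀ m, y m ≠ d ∧ y m ≠ d + c) :
    Tendsto (fun z => (z - d) * K c n (Function.update x p z) y) (𝓝[≠] d) (𝓝 0) := by
  classical
  set e : Fin n × Fin n := if p < q then (p, q) else (q, p) with he
  set sc : ℂ := if p < q then -c else c with hsc
  set GY : ℂ := ∏ j : Fin n, ∏ k ∈ Finset.univ.filter (fun k => j < k), gf c (y j) (y k) with hGY
  set R : ℂ → ℂ := fun z =>
    ∏ pr ∈ (PS n).erase e, gf c (Function.update x p z pr.2) (Function.update x p z pr.1) with hR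
  set H : ℂ → ℂ := fun z =>
    ∏ j : Fin n, ∏ k : Fin n, hf c (Function.update x p z j) (y k) with hH
  set D : ℂ → ℂ := fun z =>
    (Matrix.of fun i m => tf c (Function.update x p z i) (y m)).det with hD
  have key : ∀ z : ℂ, z ≠ d →
      (z - d) * K c n (Function.update x p z) y = (GY * sc) * (R z * (H z * D z)) := by
    intro z hz
    have hzd : z - d ≠ 0 := sub_ne_zero.2 hz
    have hdz : d - z ≠ 0 := sub_ne_zero.2 (Ne.symm hz)
    rw [K, xprod_extract c (Function.update x p z) hpq, ← he]
    have hfac : (z - d) *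
        gf c (Function.update x p z e.2) (Function.update x p z e.1) = sc := by
      rcases hpq.lt_or_gt with h | h
      · rw [hsc, if_pos h, he, if_pos h]
        simp only [gf]
        rw [Function.update_self, Function.update_of_ne (Ne.symm hpq), hd]
        field_simp
        ring
      · have h' : ¬ p < q := asymm h
        rw [hsc, if_neg h', he, if_neg h']
        simp only [gf]
        rw [Function.update_self, Function.update_of_ne (Ne.symm hpq), hd]
        field_simp
    calc (z - d) * (gf c (Function.update x p z e.2) (Function.update x p z e.1) * R z *
          GY * H z * D z)
        = ((z - d) * gf c (Function.update x p z e.2) (Function.update x p z e.1)) *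
            (GY * (R z * (H z * D z))) := by ring
      _ = (GY * sc) * (R z * (H z * D z)) := by rw [hfac]; ring
  have hRt : Tendsto R (𝓝[≠] d) (𝓝 (R d)) := by
    apply tendsto_finset_prod
    intro pr hpr
    exact tendsto_gf (update_coord_tendsto x p d pr.2) (update_coord_tendsto x p d pr.1)
      (Ne.symm (updated_ne hpq hd hinj hpr))
  have hHt : Tendsto H (𝓝[≠] d) (𝓝 (H d)) := by
    apply tendsto_finset_prod
    intro jj _
    exact tendsto_finset_prod _ fun kk _ =>
      tendsto_hf (update_coord_tendsto x p d jj) tendsto_const_nhds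
  have hDt : Tendsto D (𝓝[≠] d) (𝓝 (D d)) := by
    apply tendsto_det
    intro i m
    by_cases hi : i = p
    · subst hi
      simp only [Matrix.of_apply, Function.update_self]
      exact tendsto_tf tendsto_z tendsto_const_nhds (sub_ne_zero.2 (Ne.symm (hy m).1))
        (ym_dc (hy m).2)
    · simp only [Matrix.of_apply, Function.update_of_ne hi]
      exact tendsto_const_nhds
  have hDd : D d = 0 := by
    apply Matrix.det_zero_of_row_eq hpq
    funext m
    simp only [Matrix.of_apply, Function.update_self, Function.update_of_ne (Ne.symm hpq), hd]
  have hlim : Tendsto (fun z => (GY * sc) * (R z * (H z * D z))) (𝓝[≠] d)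
      (𝓝 ((GY * sc) * (R d * (H d * D d)))) :=
    tendsto_const_nhds.mul (hRt.mul (hHt.mul hDt))
  have hev : (fun z => (GY * sc) * (R z * (H z * D z)))
      =ᶠ[𝓝[≠] d] (fun z => (z - d) * K c n (Function.update x p z) y) :=
    eventually_mem_nhdsWithin.mono fun z hz => (key z hz).symm
  have := hlim.congr' hev
  rw [hDd] at this
  simpa using this

end MainLimits

section MainLimits2

variable {n : ℕ}

lemma tendstoB_y (c : ℂ) (x y : Fin n → ℂ) (p q : Fin n) (hpq : p ≠ q) (d : ℂ)
    (hd : y q = d)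
    (hinj : ∀ i i', i ≠ i' → i ≠ p → i' ≠ p → y i ≠ y i')
    (hx : ∀ i, x i ≠ d ∧ x i ≠ d - c) :
    ∃ L, Tendsto (fun z => K c n x (Function.update y p z)) (𝓝[≠] d) (𝓝 L) := by
  classical
  set e : Fin n × Fin n := if p < q then (p, q) else (q, p) with he
  set sc : ℂ := if p < q then c else -c with hsc
  set GX : ℂ := ∏ j : Fin n, ∏ k ∈ Finset.univ.filter (fun k => k < j), gf c (x j) (x k) with hGX
  set R : ℂ → ℂ := fun z =>
    ∏ pr ∈ (PS n).erase e, gf c (Function.update y p z pr.1) (Function.update y p z pr.2) with hR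
  set H : ℂ → ℂ := fun z =>
    ∏ j : Fin n, ∏ k : Fin n, hf c (x j) (Function.update y p z k) with hH
  set Md : Matrix (Fin n) (Fin n) ℂ :=
    Matrix.of fun i m => tf c (x i) (Function.update y p d m) with hMd
  set Q : Fin n → ℂ → ℂ := fun i z =>
    c ^ 2 * (2 * x i - d - z + c) /
      ((x i - z) * (x i - z + c) * ((x i - d) * (x i - d + c))) with hQ
  set E : ℂ → ℂ := fun z => (Md.updateCol p fun i => Q i z).det with hE
  have hx3 : ∀ i, x i - d ≠ 0 := fun i => sub_ne_zero.2 (hx i).1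
  have hx4 : ∀ i, x i - d + c ≠ 0 := fun i => xi_dc (hx i).2
  -- eventual good set
  have ev2 : ∀ᶠ z in 𝓝 d, ∀ i, x i - z ≠ 0 ∧ x i - z + c ≠ 0 := by
    rw [Filter.eventually_all]
    intro i
    have c1 : ContinuousAt (fun z : ℂ => x i - z) d := by fun_prop
    have c2 : ContinuousAt (fun z : ℂ => x i - z + c) d := by fun_prop
    exact (c1.eventually_ne (hx3 i)).and (c2.eventually_ne (hx4 i))
  have ev : ∀ᶠ z in 𝓝[≠] d, z ≠ d ∧ ∀ i, x i - z ≠ 0 ∧ x i - z + c ≠ 0 :=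
    eventually_mem_nhdsWithin.and (ev2.filter_mono nhdsWithin_le_nhds)
  have hMdd : Md.det = 0 := by
    apply Matrix.det_zero_of_column_eq hpq
    intro i
    simp only [hMd, Matrix.of_apply, Function.update_self, Function.update_of_ne (Ne.symm hpq), hd]
  have key : ∀ z : ℂ, (z ≠ d ∧ ∀ i, x i - z ≠ 0 ∧ x i - z + c ≠ 0) →
      K c n x (Function.update y p z) = (GX * sc) * (R z * (H z * E z)) := by
    rintro z ⟨hz, hgood⟩
    have hzd : z - d ≠ 0 := sub_ne_zero.2 hz
    rw [K, yprod_extract c (Function.update y p z) hpq, ← he]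
    have hfac : gf c (Function.update y p z e.1) (Function.update y p z e.2)
        = sc / (z - d) := by
      rcases hpq.lt_or_gt with h | h
      · rw [hsc, if_pos h, he, if_pos h]
        simp only [gf]
        rw [Function.update_self, Function.update_of_ne (Ne.symm hpq), hd]
      · have h' : ¬ p < q := asymm h
        rw [hsc, if_neg h', he, if_neg h']
        simp only [gf]
        rw [Function.update_self, Function.update_of_ne (Ne.symm hpq), hd]
        have hdz : d - z ≠ 0 := sub_ne_zero.2 (Ne.symm hz)
        field_simp
        ring
    have hdet : (Matrix.of fun i m => tf c (x i) (Function.update y p z m)).det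
        = (z - d) * E z := by
      have hM : (Matrix.of fun i m => tf c (x i) (Function.update y p z m))
          = Md.updateCol p (fun i => tf c (x i) z) := by
        ext i m
        rw [Matrix.updateCol_apply]
        by_cases hm : m = p
        · subst hm; simp
        · simp only [if_neg hm, Matrix.of_apply, hMd, Function.update_of_ne hm]
      have hcol : (fun i => tf c (x i) z)
          = (fun i => tf c (x i) d) + (z - d) • (fun i => Q i z) := by
        funext i
        simp only [Pi.add_apply, Pi.smul_apply, smul_eq_mul, tf, hQ]
        have h1 := (hgood i).1
        have h2 := (hgood i).2
        have h3 := hx3 i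
        have h4 := hx4 i
        field_simp
        ring
      have h0 : Md.updateCol p (fun i => tf c (x i) d) = Md := by
        have hcol0 : (fun i => tf c (x i) d) = fun i => Md i p := by
          funext i; simp [hMd]
        rw [hcol0, Matrix.updateCol_eq_self]
      rw [hM, hcol, Matrix.det_updateCol_add, Matrix.det_updateCol_smul, h0, hMdd]
      simp [hE]
    rw [hdet, hfac]
    field_simp
    ring
  have hRt : Tendsto R (𝓝[≠] d) (𝓝 (R d)) := by
    apply tendsto_finset_prod
    intro pr hpr
    exact tendsto_gf (update_coord_tendsto y p d pr.1) (update_coord_tendsto y p d pr.2)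
      (updated_ne hpq hd hinj hpr)
  have hHt : Tendsto H (𝓝[≠] d) (𝓝 (H d)) := by
    apply tendsto_finset_prod
    intro jj _
    exact tendsto_finset_prod _ fun kk _ =>
      tendsto_hf tendsto_const_nhds (update_coord_tendsto y p d kk)
  have hEt : Tendsto E (𝓝[≠] d) (𝓝 (E d)) := by
    apply tendsto_det
    intro i m
    simp only [Matrix.updateCol_apply]
    by_cases hm : m = p
    · simp only [if_pos hm, hQ]
      apply Tendsto.div
      · exact tendsto_const_nhds.mul
          (((tendsto_const_nhds.sub tendsto_z).add tendsto_const_nhds))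
      · exact ((tendsto_const_nhds.sub tendsto_z).mul
          ((tendsto_const_nhds.sub tendsto_z).add tendsto_const_nhds)).mul tendsto_const_nhds
      · exact mul_ne_zero (mul_ne_zero (hx3 i) (hx4 i)) (mul_ne_zero (hx3 i) (hx4 i))
    · simp only [if_neg hm]
      exact tendsto_const_nhds
  refine ⟨(GX * sc) * (R d * (H d * E d)), ?_⟩
  have hlim : Tendsto (fun z => (GX * sc) * (R z * (H z * E z))) (𝓝[≠] d)
      (𝓝 ((GX * sc) * (R d * (H d * E d)))) :=
    tendsto_const_nhds.mul (hRt.mul (hHt.mul hEt))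
  exact hlim.congr' (ev.mono fun z hz => (key z hz).symm)

lemma tendstoC_y (c : ℂ) (x y : Fin n → ℂ) (p : Fin n) (d : ℂ)
    (hyd : ∀ i, i ≠ p → y i ≠ d)
    (hx : ∀ i, x i ≠ d ∧ x i ≠ d - c) :
    Tendsto (fun z => K c n x (Function.update y p z)) (𝓝[≠] d)
      (𝓝 (K c n x (Function.update y p d))) := by
  classical
  simp only [K]
  refine Tendsto.mul (Tendsto.mul (Tendsto.mul tendsto_const_nhds ?_) ?_) ?_
  · apply tendsto_finset_prod
    intro jj _
    apply tendsto_finset_prod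
    intro kk hkk
    have hjk : jj < kk := by simpa using hkk
    by_cases hj : jj = p
    · have hk : kk ≠ p := by rw [← hj]; exact Ne.symm (ne_of_lt hjk)
      refine tendsto_gf (update_coord_tendsto y p d jj) (update_coord_tendsto y p d kk) ?_
      rw [hj, Function.update_self, Function.update_of_ne hk]
      exact fun hcon => hyd kk hk hcon.symm
    · by_cases hk : kk = p
      · refine tendsto_gf (update_coord_tendsto y p d jj) (update_coord_tendsto y p d kk) ?_
        rw [hk, Function.update_self, Function.update_of_ne hj]
        exact hyd jj hj
      · simp only [Function.update_of_ne hj, Function.update_of_ne hk]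
        exact tendsto_const_nhds
  · apply tendsto_finset_prod
    intro jj _
    exact tendsto_finset_prod _ fun kk _ =>
      tendsto_hf tendsto_const_nhds (update_coord_tendsto y p d kk)
  · apply tendsto_det
    intro i m
    by_cases hm : m = p
    · subst hm
      simp only [Matrix.of_apply, Function.update_self]
      exact tendsto_tf tendsto_const_nhds tendsto_z (sub_ne_zero.2 (hx i).1) (xi_dc (hx i).2)
    · simp only [Matrix.of_apply, Function.update_of_ne hm]
      exact tendsto_const_nhds

lemma tendstoC_x (c : ℂ) (x y : Fin n → ℂ) (p : Fin n) (d : ℂ)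
    (hxd : ∀ i, i ≠ p → x i ≠ d)
    (hy : ∀ m, y m ≠ d ∧ y m ≠ d + c) :
    Tendsto (fun z => K c n (Function.update x p z) y) (𝓝[≠] d)
      (𝓝 (K c n (Function.update x p d) y)) := by
  classical
  simp only [K]
  refine Tendsto.mul (Tendsto.mul (Tendsto.mul ?_ tendsto_const_nhds) ?_) ?_
  · apply tendsto_finset_prod
    intro jj _
    apply tendsto_finset_prod
    intro kk hkk
    have hjk : kk < jj := by simpa using hkk
    by_cases hj : jj = p
    · have hk : kk ≠ p := by rw [← hj]; exact ne_of_lt hjk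
      refine tendsto_gf (update_coord_tendsto x p d jj) (update_coord_tendsto x p d kk) ?_
      rw [hj, Function.update_self, Function.update_of_ne hk]
      exact fun hcon => hxd kk hk hcon.symm
    · by_cases hk : kk = p
      · refine tendsto_gf (update_coord_tendsto x p d jj) (update_coord_tendsto x p d kk) ?_
        rw [hk, Function.update_self, Function.update_of_ne hj]
        exact hxd jj hj
      · simp only [Function.update_of_ne hj, Function.update_of_ne hk]
        exact tendsto_const_nhds
  · apply tendsto_finset_prod
    intro jj _
    exact tendsto_finset_prod _ fun kk _ =>
      tendsto_hf (update_coord_tendsto x p d jj) tendsto_const_nhds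
  · apply tendsto_det
    intro i m
    by_cases hi : i = p
    · subst hi
      simp only [Matrix.of_apply, Function.update_self]
      exact tendsto_tf tendsto_z tendsto_const_nhds (sub_ne_zero.2 (Ne.symm (hy m).1))
        (ym_dc (hy m).2)
    · simp only [Matrix.of_apply, Function.update_of_ne hi]
      exact tendsto_const_nhds

end MainLimits2

/-- The bilinear sum over partitions of `w̄` into `w̄_I` (size `b`) and `w̄_II` (size `a`):
`S(w̄) = Σ K_b(s̄-c | w̄_I) K_a(w̄_II | t̄) K_b(ȳ | w̄_I) ∏_{u∈w̄_I, v∈w̄_II} f(u,v)`. -/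
noncomputable def Zsum (c : ℂ) (a b : ℕ) (tb : Fin a → ℂ) (sb yb : Fin b → ℂ)
    (w : Fin (b + a) → ℂ) : ℂ :=
  ∑ A ∈ (Finset.powersetCard b (Finset.univ : Finset (Fin (b + a)))).attach,
    have hA : A.1.card = b := (Finset.mem_powersetCard.mp A.2).2
    have hAc : A.1ᶜ.card = a := by
      rw [Finset.card_compl, Fintype.card_fin, hA]
      omega
    K c b (fun i => sb i - c) (fun i => w (A.1.orderIsoOfFin hA i)) *
    K c a (fun i => w (A.1ᶜ.orderIsoOfFin hAc i)) tb *
    K c b yb (fun i => w (A.1.orderIsoOfFin hA i)) *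
    ∏ u ∈ A.1, ∏ v ∈ A.1ᶜ, ff c (w u) (w v)

/-- The highest coefficient `Z_{a,b}(t̄; x̄ | s̄; ȳ)` via the sum over partitions of
`w̄ = s̄ ∪ x̄`. -/
noncomputable def Z (c : ℂ) (a b : ℕ) (tb xb : Fin a → ℂ) (sb yb : Fin b → ℂ) : ℂ :=
  (-1 : ℂ) ^ b * Zsum c a b tb sb yb (Fin.append sb xb)

section Comb

noncomputable def Tt (c : ℂ) (a b : ℕ) (tb : Fin a → ℂ) (sb yb : Fin b → ℂ)
    (w : Fin (b + a) → ℂ) (A : Finset (Fin (b + a))) : ℂ :=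
  if hA : A.card = b then
    K c b (fun i => sb i - c) (fun i => w (A.orderIsoOfFin hA i)) *
    K c a (fun i => w (Aᶜ.orderIsoOfFin (by
      rw [Finset.card_compl, Fintype.card_fin, hA]; omega) i)) tb *
    K c b yb (fun i => w (A.orderIsoOfFin hA i)) *
    ∏ u ∈ A, ∏ v ∈ Aᶜ, ff c (w u) (w v)
  else 0

lemma Zsum_eq (c : ℂ) (a b : ℕ) (tb : Fin a → ℂ) (sb yb : Fin b → ℂ)
    (w : Fin (b + a) → ℂ) :
    Zsum c a b tb sb yb w
      = ∑ A ∈ Finset.powersetCard b (Finset.univ : Finset (Fin (b + a))),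
          Tt c a b tb sb yb w A := by
  rw [Zsum, ← Finset.sum_attach (Finset.powersetCard b Finset.univ) (Tt c a b tb sb yb w)]
  refine Finset.sum_congr rfl fun A _ => ?_
  have hA : A.1.card = b := (Finset.mem_powersetCard.mp A.2).2
  rw [Tt, dif_pos hA]

lemma upd_enum_mem {m cardb : ℕ} {A : Finset (Fin m)} {hA : A.card = cardb} {j : Fin m}
    (hj : j ∈ A) (w : Fin m → ℂ) (z : ℂ) :
    (fun i => Function.update w j z ↑(A.orderIsoOfFin hA i))
      = Function.update (fun i => w ↑(A.orderIsoOfFin hA i))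
          ((A.orderIsoOfFin hA).symm ⟨j, hj⟩) z := by
  funext i
  by_cases hip : i = (A.orderIsoOfFin hA).symm ⟨j, hj⟩
  · rw [hip, Function.update_self]
    have h2 : A.orderIsoOfFin hA ((A.orderIsoOfFin hA).symm ⟨j, hj⟩) = ⟨j, hj⟩ :=
      OrderIso.apply_symm_apply _ _
    rw [h2]
    exact Function.update_self j z w
  · rw [Function.update_of_ne hip]
    have hne : ↑(A.orderIsoOfFin hA i) ≠ j := by
      intro h
      apply hip
      have h3 : A.orderIsoOfFin hA i = ⟨j, hj⟩ := Subtype.ext h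
      rw [← h3, OrderIso.symm_apply_apply]
    rw [Function.update_of_ne hne]

lemma upd_enum_notMem {m cardb : ℕ} {A : Finset (Fin m)} {hA : A.card = cardb} {j : Fin m}
    (hj : j ∉ A) (w : Fin m → ℂ) (z : ℂ) :
    (fun i => Function.update w j z ↑(A.orderIsoOfFin hA i))
      = fun i => w ↑(A.orderIsoOfFin hA i) := by
  funext i
  refine Function.update_of_ne (fun h => hj ?_) _ _
  rw [← h]
  exact (A.orderIsoOfFin hA i).2

lemma enum_symm_coe {m cardb : ℕ} {A : Finset (Fin m)} {hA : A.card = cardb} {j : Fin m}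
    (hj : j ∈ A) :
    (↑(A.orderIsoOfFin hA ((A.orderIsoOfFin hA).symm ⟨j, hj⟩)) : Fin m) = j := by
  simp

lemma enum_ne_of_ne_symm {m cardb : ℕ} {A : Finset (Fin m)} {hA : A.card = cardb} {j : Fin m}
    (hj : j ∈ A) {i : Fin cardb} (hip : i ≠ (A.orderIsoOfFin hA).symm ⟨j, hj⟩) :
    (↑(A.orderIsoOfFin hA i) : Fin m) ≠ j := by
  intro h
  apply hip
  have h3 : A.orderIsoOfFin hA i = ⟨j, hj⟩ := Subtype.ext h
  rw [← h3, OrderIso.symm_apply_apply]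

lemma enum_coe_inj {m cardb : ℕ} {A : Finset (Fin m)} {hA : A.card = cardb}
    {i i' : Fin cardb} (h : i ≠ i') :
    (↑(A.orderIsoOfFin hA i) : Fin m) ≠ ↑(A.orderIsoOfFin hA i') := by
  intro hcon
  exact h ((A.orderIsoOfFin hA).injective (Subtype.ext hcon))

end Comb

section Cases

variable {a b : ℕ}

lemma caseS1 (c : ℂ) (tb : Fin a → ℂ) (sb yb : Fin b → ℂ) (w : Fin (b + a) → ℂ)
    (j k : Fin (b + a)) (hjk : j ≠ k)
    (hw : ∀ i i', i ≠ i' → i ≠ j → i' ≠ j → w i ≠ w i')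
    (hws : ∀ i l, i ≠ j → w i ≠ sb l - c ∧ w i ≠ sb l)
    (hwy : ∀ i l, i ≠ j → w i ≠ yb l ∧ w i ≠ yb l + c)
    (A : Finset (Fin (b + a))) (hA : A.card = b) (hj : j ∈ A) (hk : k ∈ A) :
    Tendsto (fun z => (z - w k) * Tt c a b tb sb yb (Function.update w j z) A)
      (𝓝[≠] (w k)) (𝓝 0) := by
  classical
  have hkj : k ≠ j := Ne.symm hjk
  set d := w k with hdd
  set eA := A.orderIsoOfFin hA with heA
  set p := eA.symm ⟨j, hj⟩ with hp
  set q := eA.symm ⟨k, hk⟩ with hq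
  set y0 : Fin b → ℂ := fun i => w ↑(eA i) with hy0
  have hAc : Aᶜ.card = a := by rw [Finset.card_compl, Fintype.card_fin, hA]; omega
  have hjc : j ∉ Aᶜ := by simp [hj]
  have hrw : ∀ z : ℂ, Tt c a b tb sb yb (Function.update w j z) A
      = K c b (fun i => sb i - c) (Function.update y0 p z) *
        K c a (fun i => w ↑(Aᶜ.orderIsoOfFin hAc i)) tb *
        K c b yb (Function.update y0 p z) *
        ∏ u ∈ A, ∏ v ∈ Aᶜ, ff c (Function.update w j z u) (Function.update w j z v) := by
    intro z
    rw [Tt, dif_pos hA, upd_enum_mem hj (w := w) (z := z),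
      upd_enum_notMem hjc (w := w) (z := z)]
  have hpq : p ≠ q := by
    intro hcon
    apply hjk
    have := congrArg (fun t => (↑(eA t) : Fin (b + a))) hcon
    simpa [hp, hq] using this
  have hqd : y0 q = d := by
    show w ↑(eA q) = w k
    exact congrArg w (enum_symm_coe hk)
  have hinj : ∀ i i', i ≠ i' → i ≠ p → i' ≠ p → y0 i ≠ y0 i' := by
    intro i i' hii' hip hi'p
    exact hw _ _ (enum_coe_inj hii') (enum_ne_of_ne_symm hj hip) (enum_ne_of_ne_symm hj hi'p)
  have hK1 : Tendsto (fun z => (z - d) *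
      K c b (fun i => sb i - c) (Function.update y0 p z)) (𝓝[≠] d) (𝓝 0) := by
    apply tendstoA_y c _ y0 p q hpq d hqd hinj
    intro i
    refine ⟨fun h => (hws k i hkj).1 h.symm, fun h => (hws k i hkj).2 (by linear_combination -h)⟩
  obtain ⟨L, hK3⟩ : ∃ L, Tendsto (fun z => K c b yb (Function.update y0 p z)) (𝓝[≠] d)
      (𝓝 L) := by
    apply tendstoB_y c yb y0 p q hpq d hqd hinj
    intro i
    refine ⟨fun h => (hwy k i hkj).1 h.symm, fun h => (hwy k i hkj).2 (by linear_combination -h)⟩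
  have hF : Tendsto (fun z => ∏ u ∈ A, ∏ v ∈ Aᶜ,
      ff c (Function.update w j z u) (Function.update w j z v)) (𝓝[≠] d)
      (𝓝 (∏ u ∈ A, ∏ v ∈ Aᶜ, ff c (Function.update w j d u) (Function.update w j d v))) := by
    apply tendsto_finset_prod
    intro u _
    apply tendsto_finset_prod
    intro v hv
    have hvj : v ≠ j := fun h => hjc (h ▸ hv)
    simp only [Function.update_of_ne hvj]
    by_cases huj : u = j
    · subst huj
      simp only [Function.update_self]
      have hkv : k ≠ v := fun h => (Finset.mem_compl.mp hv) (h ▸ hk)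
      exact tendsto_ff tendsto_z tendsto_const_nhds (hw k v hkv hkj hvj)
    · simp only [Function.update_of_ne huj]
      exact tendsto_const_nhds
  have hall := hK1.mul (hK3.mul ((tendsto_const_nhds
    (x := K c a (fun i => w ↑(Aᶜ.orderIsoOfFin hAc i)) tb)).mul hF))
  have key : ∀ z : ℂ,
      ((z - d) * K c b (fun i => sb i - c) (Function.update y0 p z)) *
        (K c b yb (Function.update y0 p z) *
          (K c a (fun i => w ↑(Aᶜ.orderIsoOfFin hAc i)) tb *
            ∏ u ∈ A, ∏ v ∈ Aᶜ, ff c (Function.update w j z u) (Function.update w j z v)))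
      = (z - d) * Tt c a b tb sb yb (Function.update w j z) A := by
    intro z
    rw [hrw z]
    ring
  have hres := hall.congr key
  simpa using hres

lemma caseS2 (c : ℂ) (tb : Fin a → ℂ) (sb yb : Fin b → ℂ) (w : Fin (b + a) → ℂ)
    (j k : Fin (b + a)) (hjk : j ≠ k)
    (hw : ∀ i i', i ≠ i' → i ≠ j → i' ≠ j → w i ≠ w i')
    (hwt : ∀ i l, i ≠ j → w i ≠ tb l ∧ w i ≠ tb l - c)
    (A : Finset (Fin (b + a))) (hA : A.card = b) (hj : j ∉ A) (hk : k ∉ A) :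
    Tendsto (fun z => (z - w k) * Tt c a b tb sb yb (Function.update w j z) A)
      (𝓝[≠] (w k)) (𝓝 0) := by
  classical
  have hkj : k ≠ j := Ne.symm hjk
  set d := w k with hdd
  have hAc : Aᶜ.card = a := by rw [Finset.card_compl, Fintype.card_fin, hA]; omega
  have hjc : j ∈ Aᶜ := Finset.mem_compl.mpr hj
  have hkc : k ∈ Aᶜ := Finset.mem_compl.mpr hk
  set eAc := Aᶜ.orderIsoOfFin hAc with heAc
  set p := eAc.symm ⟨j, hjc⟩ with hp
  set q := eAc.symm ⟨k, hkc⟩ with hq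
  set x0 : Fin a → ℂ := fun i => w ↑(eAc i) with hx0
  have hrw : ∀ z : ℂ, Tt c a b tb sb yb (Function.update w j z) A
      = K c b (fun i => sb i - c) (fun i => w ↑(A.orderIsoOfFin hA i)) *
        K c a (Function.update x0 p z) tb *
        K c b yb (fun i => w ↑(A.orderIsoOfFin hA i)) *
        ∏ u ∈ A, ∏ v ∈ Aᶜ, ff c (Function.update w j z u) (Function.update w j z v) := by
    intro z
    rw [Tt, dif_pos hA, upd_enum_notMem hj (w := w) (z := z), upd_enum_mem hjc (w := w) (z := z)]
  have hpq : p ≠ q := by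
    intro hcon
    apply hjk
    have := congrArg (fun t => (↑(eAc t) : Fin (b + a))) hcon
    simpa [hp, hq] using this
  have hqd : x0 q = d := by
    show w ↑(eAc q) = w k
    exact congrArg w (enum_symm_coe hkc)
  have hinj : ∀ i i', i ≠ i' → i ≠ p → i' ≠ p → x0 i ≠ x0 i' := by
    intro i i' hii' hip hi'p
    exact hw _ _ (enum_coe_inj hii') (enum_ne_of_ne_symm hjc hip) (enum_ne_of_ne_symm hjc hi'p)
  have hK2 : Tendsto (fun z => (z - d) * K c a (Function.update x0 p z) tb) (𝓝[≠] d) (𝓝 0) := by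
    apply tendstoA_x c x0 tb p q hpq d hqd hinj
    intro m
    refine ⟨fun h => (hwt k m hkj).1 h.symm, fun h => (hwt k m hkj).2 (by linear_combination -h)⟩
  have hF : Tendsto (fun z => ∏ u ∈ A, ∏ v ∈ Aᶜ,
      ff c (Function.update w j z u) (Function.update w j z v)) (𝓝[≠] d)
      (𝓝 (∏ u ∈ A, ∏ v ∈ Aᶜ, ff c (Function.update w j d u) (Function.update w j d v))) := by
    apply tendsto_finset_prod
    intro u hu
    apply tendsto_finset_prod
    intro v hv
    have huj : u ≠ j := fun h => hj (h ▸ hu)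
    simp only [Function.update_of_ne huj]
    by_cases hvj : v = j
    · subst hvj
      simp only [Function.update_self]
      have huk : u ≠ k := fun h => hk (h ▸ hu)
      exact tendsto_ff tendsto_const_nhds tendsto_z (hw u k huk huj hkj)
    · simp only [Function.update_of_ne hvj]
      exact tendsto_const_nhds
  have hall := hK2.mul (((tendsto_const_nhds
      (x := K c b (fun i => sb i - c) (fun i => w ↑(A.orderIsoOfFin hA i)))).mul
    ((tendsto_const_nhds (x := K c b yb (fun i => w ↑(A.orderIsoOfFin hA i)))).mul hF)))
  have key : ∀ z : ℂ,
      ((z - d) * K c a (Function.update x0 p z) tb) *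
        (K c b (fun i => sb i - c) (fun i => w ↑(A.orderIsoOfFin hA i)) *
          (K c b yb (fun i => w ↑(A.orderIsoOfFin hA i)) *
            ∏ u ∈ A, ∏ v ∈ Aᶜ, ff c (Function.update w j z u) (Function.update w j z v)))
      = (z - d) * Tt c a b tb sb yb (Function.update w j z) A := by
    intro z
    rw [hrw z]
    ring
  have hres := hall.congr key
  simpa using hres

end Cases

section Case3

variable {a b : ℕ}

set_option maxHeartbeats 2000000 in
lemma caseS3 (c : ℂ) (tb : Fin a → ℂ) (sb yb : Fin b → ℂ) (w : Fin (b + a) → ℂ)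
    (j k : Fin (b + a)) (hjk : j ≠ k)
    (hw : ∀ i i', i ≠ i' → i ≠ j → i' ≠ j → w i ≠ w i')
    (hwt : ∀ i l, i ≠ j → w i ≠ tb l ∧ w i ≠ tb l - c)
    (hws : ∀ i l, i ≠ j → w i ≠ sb l - c ∧ w i ≠ sb l)
    (hwy : ∀ i l, i ≠ j → w i ≠ yb l ∧ w i ≠ yb l + c)
    (A : Finset (Fin (b + a))) (hA : A.card = b) (hj : j ∈ A) (hk : k ∉ A) :
    Tendsto (fun z => (z - w k) * (Tt c a b tb sb yb (Function.update w j z) A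
      + Tt c a b tb sb yb (Function.update w j z) (insert k (A.erase j))))
      (𝓝[≠] (w k)) (𝓝 0) := by
  classical
  have hkj : k ≠ j := Ne.symm hjk
  set d := w k with hdd
  set B := insert k (A.erase j) with hB
  have hkAe : k ∉ A.erase j := fun h => hk (Finset.mem_of_mem_erase h)
  have hb : 0 < b := by rw [← hA]; exact Finset.card_pos.mpr ⟨j, hj⟩
  have hBcard : B.card = b := by
    rw [hB, Finset.card_insert_of_notMem hkAe, Finset.card_erase_of_mem hj, hA]
    omega
  have hkB : k ∈ B := Finset.mem_insert_self _ _
  have hjB : j ∉ B := by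
    rw [hB]
    simp [hjk]
  have hBe : B.erase k = A.erase j := by rw [hB, Finset.erase_insert hkAe]
  have hAc : Aᶜ.card = a := by rw [Finset.card_compl, Fintype.card_fin, hA]; omega
  have hBc : Bᶜ.card = a := by rw [Finset.card_compl, Fintype.card_fin, hBcard]; omega
  have hjAc : j ∉ Aᶜ := by simp [hj]
  have hkAc : k ∈ Aᶜ := Finset.mem_compl.mpr hk
  have hjBc : j ∈ Bᶜ := Finset.mem_compl.mpr hjB
  have hBce : Bᶜ.erase j = Aᶜ.erase k := by
    ext x
    by_cases hxj : x = j
    · subst hxj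
      simp [Finset.mem_erase, Finset.mem_compl, hj]
    · by_cases hxk : x = k
      · subst hxk
        simp [Finset.mem_erase, Finset.mem_compl, hkB]
      · simp only [Finset.mem_erase, Finset.mem_compl, hB, Finset.mem_insert, hxj, hxk]
        tauto
  set eA := A.orderIsoOfFin hA with heA
  set eB := B.orderIsoOfFin hBcard with heB
  set eAc := Aᶜ.orderIsoOfFin hAc with heAc
  set eBc := Bᶜ.orderIsoOfFin hBc with heBc
  set p := eA.symm ⟨j, hj⟩ with hp
  set pB := eBc.symm ⟨j, hjBc⟩ with hpB
  set y0 : Fin b → ℂ := fun i => w ↑(eA i) with hy0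
  set y0B : Fin b → ℂ := fun i => w ↑(eB i) with hy0B
  set x0 : Fin a → ℂ := fun i => w ↑(eAc i) with hx0
  set x0B : Fin a → ℂ := fun i => w ↑(eBc i) with hx0B
  have hrwA : ∀ z : ℂ, Tt c a b tb sb yb (Function.update w j z) A
      = K c b (fun i => sb i - c) (Function.update y0 p z) *
        K c a x0 tb *
        K c b yb (Function.update y0 p z) *
        ∏ u ∈ A, ∏ v ∈ Aᶜ, ff c (Function.update w j z u) (Function.update w j z v) := by
    intro z
    rw [Tt, dif_pos hA, upd_enum_mem hj (w := w) (z := z),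
      upd_enum_notMem hjAc (w := w) (z := z)]
  have hrwB : ∀ z : ℂ, Tt c a b tb sb yb (Function.update w j z) B
      = K c b (fun i => sb i - c) y0B *
        K c a (Function.update x0B pB z) tb *
        K c b yb y0B *
        ∏ u ∈ B, ∏ v ∈ Bᶜ, ff c (Function.update w j z u) (Function.update w j z v) := by
    intro z
    rw [Tt, dif_pos hBcard, upd_enum_notMem hjB (w := w) (z := z),
      upd_enum_mem hjBc (w := w) (z := z)]
  set RA : ℂ → ℂ := fun z =>
    (∏ v ∈ Aᶜ.erase k, ff c (Function.update w j z j) (Function.update w j z v)) *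
      ∏ u ∈ A.erase j, ∏ v ∈ Aᶜ, ff c (Function.update w j z u) (Function.update w j z v)
    with hRAdef
  set RB : ℂ → ℂ := fun z =>
    (∏ v ∈ Bᶜ.erase j, ff c (Function.update w j z k) (Function.update w j z v)) *
      ∏ u ∈ B.erase k, ∏ v ∈ Bᶜ, ff c (Function.update w j z u) (Function.update w j z v)
    with hRBdef
  have hFA : ∀ z : ℂ, (∏ u ∈ A, ∏ v ∈ Aᶜ,
      ff c (Function.update w j z u) (Function.update w j z v))
      = ff c (Function.update w j z j) (Function.update w j z k) * RA z := by
    intro z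
    rw [← Finset.mul_prod_erase A
      (fun u => ∏ v ∈ Aᶜ, ff c (Function.update w j z u) (Function.update w j z v)) hj,
      ← Finset.mul_prod_erase Aᶜ
      (fun v => ff c (Function.update w j z j) (Function.update w j z v)) hkAc, hRAdef]
    ring
  have hFB : ∀ z : ℂ, (∏ u ∈ B, ∏ v ∈ Bᶜ,
      ff c (Function.update w j z u) (Function.update w j z v))
      = ff c (Function.update w j z k) (Function.update w j z j) * RB z := by
    intro z
    rw [← Finset.mul_prod_erase B
      (fun u => ∏ v ∈ Bᶜ, ff c (Function.update w j z u) (Function.update w j z v)) hkB,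
      ← Finset.mul_prod_erase Bᶜ
      (fun v => ff c (Function.update w j z k) (Function.update w j z v)) hjBc, hRBdef]
    ring
  -- key algebraic identity away from the pole
  have hkey : ∀ z : ℂ, z ≠ d →
      (z - d) * (Tt c a b tb sb yb (Function.update w j z) A
        + Tt c a b tb sb yb (Function.update w j z) B)
      = (z - d + c) * (K c b (fun i => sb i - c) (Function.update y0 p z) *
          (K c a x0 tb * (K c b yb (Function.update y0 p z) * RA z)))
        + (z - d - c) * (K c b (fun i => sb i - c) y0B *
          (K c a (Function.update x0B pB z) tb * (K c b yb y0B * RB z))) := by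
    intro z hz
    have hzd : z - d ≠ 0 := sub_ne_zero.2 hz
    have hdz : d - z ≠ 0 := sub_ne_zero.2 (Ne.symm hz)
    have e1 : (z - d) * ff c (Function.update w j z j) (Function.update w j z k)
        = z - d + c := by
      rw [Function.update_self, Function.update_of_ne hkj, ← hdd, ff]
      field_simp
    have e2 : (z - d) * ff c (Function.update w j z k) (Function.update w j z j)
        = z - d - c := by
      rw [Function.update_self, Function.update_of_ne hkj, ← hdd, ff]
      field_simp
      ring
    rw [hrwA z, hrwB z, hFA z, hFB z]
    calc (z - d) * (K c b (fun i => sb i - c) (Function.update y0 p z) * K c a x0 tb *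
            K c b yb (Function.update y0 p z) *
            (ff c (Function.update w j z j) (Function.update w j z k) * RA z)
          + K c b (fun i => sb i - c) y0B * K c a (Function.update x0B pB z) tb *
            K c b yb y0B *
            (ff c (Function.update w j z k) (Function.update w j z j) * RB z))
        = ((z - d) * ff c (Function.update w j z j) (Function.update w j z k)) *
            (K c b (fun i => sb i - c) (Function.update y0 p z) *
              (K c a x0 tb * (K c b yb (Function.update y0 p z) * RA z)))
          + ((z - d) * ff c (Function.update w j z k) (Function.update w j z j)) *
            (K c b (fun i => sb i - c) y0B *
              (K c a (Function.update x0B pB z) tb * (K c b yb y0B * RB z))) := by ring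
      _ = _ := by rw [e1, e2]
  -- limits of the pieces
  have hzc1 : Tendsto (fun z : ℂ => z - d + c) (𝓝[≠] d) (𝓝 c) := by
    have := (tendsto_z (d := d)).sub (tendsto_const_nhds (x := d)) |>.add
      (tendsto_const_nhds (x := c))
    simpa using this
  have hzc2 : Tendsto (fun z : ℂ => z - d - c) (𝓝[≠] d) (𝓝 (-c)) := by
    have := (tendsto_z (d := d)).sub (tendsto_const_nhds (x := d)) |>.sub
      (tendsto_const_nhds (x := c))
    simpa using this
  have hK1A : Tendsto (fun z => K c b (fun i => sb i - c) (Function.update y0 p z)) (𝓝[≠] d)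
      (𝓝 (K c b (fun i => sb i - c) (Function.update y0 p d))) := by
    apply tendstoC_y
    · intro i hip
      have h1 : (↑(eA i) : Fin (b + a)) ≠ j := enum_ne_of_ne_symm hj hip
      have h2 : (↑(eA i) : Fin (b + a)) ≠ k := fun h => hk (h ▸ (eA i).2)
      exact hw _ k h2 h1 hkj
    · intro i
      refine ⟨fun h => (hws k i hkj).1 h.symm, fun h => (hws k i hkj).2 (by linear_combination -h)⟩
  have hK3A : Tendsto (fun z => K c b yb (Function.update y0 p z)) (𝓝[≠] d)
      (𝓝 (K c b yb (Function.update y0 p d))) := by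
    apply tendstoC_y
    · intro i hip
      have h1 : (↑(eA i) : Fin (b + a)) ≠ j := enum_ne_of_ne_symm hj hip
      have h2 : (↑(eA i) : Fin (b + a)) ≠ k := fun h => hk (h ▸ (eA i).2)
      exact hw _ k h2 h1 hkj
    · intro i
      refine ⟨fun h => (hwy k i hkj).1 h.symm, fun h => (hwy k i hkj).2 (by linear_combination -h)⟩
  have hK2B : Tendsto (fun z => K c a (Function.update x0B pB z) tb) (𝓝[≠] d)
      (𝓝 (K c a (Function.update x0B pB d) tb)) := by
    apply tendstoC_x
    · intro i hip
      have h1 : (↑(eBc i) : Fin (b + a)) ≠ j := enum_ne_of_ne_symm hjBc hip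
      have h2 : (↑(eBc i) : Fin (b + a)) ≠ k := by
        intro h
        have := (eBc i).2
        rw [h] at this
        exact (Finset.mem_compl.mp this) hkB
      exact hw _ k h2 h1 hkj
    · intro m
      refine ⟨fun h => (hwt k m hkj).1 h.symm, fun h => (hwt k m hkj).2 (by linear_combination -h)⟩
  have hRA : Tendsto RA (𝓝[≠] d) (𝓝 (RA d)) := by
    rw [hRAdef]
    apply Tendsto.mul
    · apply tendsto_finset_prod
      intro v hv
      have hvk : v ≠ k := (Finset.mem_erase.mp hv).1
      have hvAc : v ∈ Aᶜ := (Finset.mem_erase.mp hv).2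
      have hvj : v ≠ j := fun h => hjAc (h ▸ hvAc)
      simp only [Function.update_self, Function.update_of_ne hvj]
      exact tendsto_ff tendsto_z tendsto_const_nhds (hw k v (Ne.symm hvk) hkj hvj)
    · apply tendsto_finset_prod
      intro u hu
      apply tendsto_finset_prod
      intro v hv
      have huj : u ≠ j := (Finset.mem_erase.mp hu).1
      have hvj : v ≠ j := fun h => hjAc (h ▸ hv)
      simp only [Function.update_of_ne huj, Function.update_of_ne hvj]
      exact tendsto_const_nhds
  have hRB : Tendsto RB (𝓝[≠] d) (𝓝 (RB d)) := by
    rw [hRBdef]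
    apply Tendsto.mul
    · apply tendsto_finset_prod
      intro v hv
      have hvj : v ≠ j := (Finset.mem_erase.mp hv).1
      simp only [Function.update_of_ne hkj, Function.update_of_ne hvj]
      exact tendsto_const_nhds
    · apply tendsto_finset_prod
      intro u hu
      apply tendsto_finset_prod
      intro v hv
      have hu' : u ∈ A.erase j := hBe ▸ hu
      have huj : u ≠ j := (Finset.mem_erase.mp hu').1
      have huk : u ≠ k := (Finset.mem_erase.mp hu).1
      simp only [Function.update_of_ne huj]
      by_cases hvj : v = j
      · subst hvj
        simp only [Function.update_self]
        exact tendsto_ff tendsto_const_nhds tendsto_z (hw u k huk huj hkj)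
      · simp only [Function.update_of_ne hvj]
        exact tendsto_const_nhds
  have hall : Tendsto (fun z : ℂ =>
      (z - d + c) * (K c b (fun i => sb i - c) (Function.update y0 p z) *
        (K c a x0 tb * (K c b yb (Function.update y0 p z) * RA z)))
      + (z - d - c) * (K c b (fun i => sb i - c) y0B *
        (K c a (Function.update x0B pB z) tb * (K c b yb y0B * RB z)))) (𝓝[≠] d)
      (𝓝 (c * (K c b (fun i => sb i - c) (Function.update y0 p d) *
        (K c a x0 tb * (K c b yb (Function.update y0 p d) * RA d)))
      + (-c) * (K c b (fun i => sb i - c) y0B *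
        (K c a (Function.update x0B pB d) tb * (K c b yb y0B * RB d))))) :=
    (hzc1.mul (hK1A.mul (tendsto_const_nhds.mul (hK3A.mul hRA)))).add
      (hzc2.mul (tendsto_const_nhds.mul (hK2B.mul (tendsto_const_nhds.mul hRB))))
  -- the permutation relating the two partitions
  have hmem : ∀ x : Fin (b + a), x ∈ A ↔ Equiv.swap j k x ∈ B := by
    intro x
    by_cases hxj : x = j
    · subst hxj
      simp [Equiv.swap_apply_left, hj, hkB]
    · by_cases hxk : x = k
      · subst hxk
        simp [Equiv.swap_apply_right, hk, hjB]
      · rw [Equiv.swap_apply_of_ne_of_ne hxj hxk, hB]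
        simp only [Finset.mem_insert, Finset.mem_erase, hxk, hxj, false_or, ne_eq,
          not_false_eq_true, true_and]
  have hmemc : ∀ x : Fin (b + a), x ∈ Aᶜ ↔ Equiv.swap j k x ∈ Bᶜ := by
    intro x
    simp only [Finset.mem_compl]
    exact not_congr (hmem x)
  set mid : {x // x ∈ A} ≃ {x // x ∈ B} := (Equiv.swap j k).subtypeEquiv hmem with hmid
  set midc : {x // x ∈ Aᶜ} ≃ {x // x ∈ Bᶜ} := (Equiv.swap j k).subtypeEquiv hmemc with hmidc
  set σ : Equiv.Perm (Fin b) := (eA.toEquiv.trans mid).trans eB.toEquiv.symm with hsig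
  set σc : Equiv.Perm (Fin a) := (eAc.toEquiv.trans midc).trans eBc.toEquiv.symm with hsigc
  have hσ : ∀ i, (↑(eB (σ i)) : Fin (b + a)) = Equiv.swap j k ↑(eA i) := by
    intro i
    have h1 : eB.toEquiv (σ i) = mid (eA.toEquiv i) := by
      rw [hsig]
      simp [Equiv.trans_apply]
    have h2 : (↑(mid (eA.toEquiv i)) : Fin (b + a)) = Equiv.swap j k ↑(eA i) := by
      rw [hmid]
      rfl
    rw [← h2, ← h1]
    rfl
  have hσc : ∀ i, (↑(eBc (σc i)) : Fin (b + a)) = Equiv.swap j k ↑(eAc i) := by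
    intro i
    have h1 : eBc.toEquiv (σc i) = midc (eAc.toEquiv i) := by
      rw [hsigc]
      simp [Equiv.trans_apply]
    have h2 : (↑(midc (eAc.toEquiv i)) : Fin (b + a)) = Equiv.swap j k ↑(eAc i) := by
      rw [hmidc]
      rfl
    rw [← h2, ← h1]
    rfl
  have hYeq : Function.update y0 p d = y0B ∘ σ := by
    funext i
    by_cases hip : i = p
    · rw [hip, Function.update_self]
      show d = w ↑(eB (σ p))
      rw [hσ p]
      have h3 : (↑(eA p) : Fin (b + a)) = j := enum_symm_coe hj
      rw [h3, Equiv.swap_apply_left, hdd]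
    · rw [Function.update_of_ne hip]
      show w ↑(eA i) = w ↑(eB (σ i))
      rw [hσ i, Equiv.swap_apply_of_ne_of_ne (enum_ne_of_ne_symm hj hip)
        (fun h => hk (by rw [← h]; exact (eA i).2))]
  have hXeq : x0 = (Function.update x0B pB d) ∘ σc := by
    funext i
    show w ↑(eAc i) = Function.update x0B pB d (σc i)
    by_cases hik : (↑(eAc i) : Fin (b + a)) = k
    · have hσp : σc i = pB := by
        have h1 : (↑(eBc (σc i)) : Fin (b + a)) = j := by
          rw [hσc i, hik, Equiv.swap_apply_right]
        have h2 : (↑(eBc pB) : Fin (b + a)) = j := enum_symm_coe hjBc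
        exact eBc.injective (Subtype.ext (h1.trans h2.symm))
      rw [hσp, Function.update_self, hik]
    · have hσnp : σc i ≠ pB := by
        intro hcon
        apply hik
        have h1 : (↑(eBc (σc i)) : Fin (b + a)) = j := by
          rw [hcon]
          exact enum_symm_coe hjBc
        rw [hσc i] at h1
        exact (Equiv.swap j k).injective (h1.trans (Equiv.swap_apply_right j k).symm)
      rw [Function.update_of_ne hσnp]
      show w ↑(eAc i) = w ↑(eBc (σc i))
      rw [hσc i, Equiv.swap_apply_of_ne_of_ne (fun h => hjAc (by rw [← h]; exact (eAc i).2)) hik]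
  have hK1eq : K c b (fun i => sb i - c) (Function.update y0 p d)
      = K c b (fun i => sb i - c) y0B := by
    rw [hYeq]
    exact K_y_perm c _ y0B σ
  have hK3eq : K c b yb (Function.update y0 p d) = K c b yb y0B := by
    rw [hYeq]
    exact K_y_perm c _ y0B σ
  have hK2eq : K c a x0 tb = K c a (Function.update x0B pB d) tb := by
    rw [hXeq]
    exact K_x_perm c _ tb σc
  have hReq : RA d = RB d := by
    simp only [hRAdef, hRBdef]
    congr 1
    · rw [hBce]
      apply Finset.prod_congr rfl
      intro v hv
      have hvj : v ≠ j := fun h => hjAc (h ▸ (Finset.mem_erase.mp hv).2)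
      simp [Function.update_self, Function.update_of_ne hkj, Function.update_of_ne hvj, hdd]
    · rw [hBe]
      apply Finset.prod_congr rfl
      intro u hu
      have huj : u ≠ j := (Finset.mem_erase.mp hu).1
      rw [← Finset.mul_prod_erase Aᶜ
        (fun v => ff c (Function.update w j d u) (Function.update w j d v)) hkAc,
        ← Finset.mul_prod_erase Bᶜ
        (fun v => ff c (Function.update w j d u) (Function.update w j d v)) hjBc, hBce]
      congr 1
      simp [Function.update_self, Function.update_of_ne hkj, Function.update_of_ne huj, hdd]
  have hV : c * (K c b (fun i => sb i - c) (Function.update y0 p d) *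
      (K c a x0 tb * (K c b yb (Function.update y0 p d) * RA d)))
      + (-c) * (K c b (fun i => sb i - c) y0B *
      (K c a (Function.update x0B pB d) tb * (K c b yb y0B * RB d))) = 0 := by
    rw [hK1eq, hK3eq, hK2eq, hReq]
    ring
  have hev : (fun z : ℂ =>
      (z - d + c) * (K c b (fun i => sb i - c) (Function.update y0 p z) *
        (K c a x0 tb * (K c b yb (Function.update y0 p z) * RA z)))
      + (z - d - c) * (K c b (fun i => sb i - c) y0B *
        (K c a (Function.update x0B pB z) tb * (K c b yb y0B * RB z))))
      =ᶠ[𝓝[≠] d] (fun z => (z - d) * (Tt c a b tb sb yb (Function.update w j z) A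
        + Tt c a b tb sb yb (Function.update w j z) B)) :=
    eventually_mem_nhdsWithin.mono fun z hz => (hkey z hz).symm
  have hres := hall.congr' hev
  rw [hV] at hres
  exact hres

end Case3

set_option maxHeartbeats 1000000 in
theorem stmt19 (c : ℂ) (hc : c ≠ 0) (a b : ℕ)
    (tb : Fin a → ℂ) (sb yb : Fin b → ℂ) (w : Fin (b + a) → ℂ)
    (j k : Fin (b + a)) (hjk : j ≠ k)
    (hw : ∀ i i', i ≠ i' → i ≠ j → i' ≠ j → w i ≠ w i')
    (hwc : ∀ i i', i ≠ j → i' ≠ j → w i - w i' ≠ c)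
    (hwt : ∀ i l, i ≠ j → w i ≠ tb l ∧ w i ≠ tb l - c)
    (hws : ∀ i l, i ≠ j → w i ≠ sb l - c ∧ w i ≠ sb l)
    (hwy : ∀ i l, i ≠ j → w i ≠ yb l ∧ w i ≠ yb l + c) :
    Tendsto (fun z => (z - w k) * Zsum c a b tb sb yb (Function.update w j z))
      (𝓝[≠] (w k)) (𝓝 0) := by
  classical
  set pc := Finset.powersetCard b (Finset.univ : Finset (Fin (b + a))) with hpc
  have hsplit : ∀ g : Finset (Fin (b + a)) → ℂ,
      ∑ A ∈ pc, g A
        = ((∑ A ∈ pc.filter (fun A => j ∈ A ∧ k ∈ A), g A)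
            + ∑ A ∈ pc.filter (fun A => j ∈ A ∧ ¬ k ∈ A), g A)
          + ((∑ A ∈ pc.filter (fun A => ¬ j ∈ A ∧ k ∈ A), g A)
            + ∑ A ∈ pc.filter (fun A => ¬ j ∈ A ∧ ¬ k ∈ A), g A) := by
    intro g
    rw [← Finset.sum_filter_add_sum_filter_not pc (fun A => j ∈ A) g,
      ← Finset.sum_filter_add_sum_filter_not (pc.filter (fun A => j ∈ A)) (fun A => k ∈ A) g,
      ← Finset.sum_filter_add_sum_filter_not (pc.filter (fun A => ¬ j ∈ A)) (fun A => k ∈ A) g,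
      Finset.filter_filter, Finset.filter_filter, Finset.filter_filter, Finset.filter_filter]
  -- membership facts
  have hcard : ∀ {A : Finset (Fin (b + a))}, A ∈ pc → A.card = b := by
    intro A hA
    exact (Finset.mem_powersetCard.mp hA).2
  -- pairing of mixed partitions
  have hpair : ∀ z : ℂ,
      ∑ A ∈ pc.filter (fun A => ¬ j ∈ A ∧ k ∈ A),
        (z - w k) * Tt c a b tb sb yb (Function.update w j z) A
      = ∑ A ∈ pc.filter (fun A => j ∈ A ∧ ¬ k ∈ A),
        (z - w k) * Tt c a b tb sb yb (Function.update w j z) (insert k (A.erase j)) := by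
    intro z
    apply Finset.sum_nbij' (i := fun B => insert j (B.erase k)) (j := fun A => insert k (A.erase j))
    · intro B hB
      have hmB := Finset.mem_filter.mp hB
      have hBpc := hmB.1
      have hjB := hmB.2.1
      have hkB := hmB.2.2
      have hBcard : B.card = b := hcard hBpc
      have hjBe : j ∉ B.erase k := fun h => hjB (Finset.mem_of_mem_erase h)
      have hb : 0 < b := by rw [← hBcard]; exact Finset.card_pos.mpr ⟨k, hkB⟩
      refine Finset.mem_filter.mpr ⟨Finset.mem_powersetCard.mpr ⟨Finset.subset_univ _, ?_⟩, ?_, ?_⟩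
      · rw [Finset.card_insert_of_notMem hjBe, Finset.card_erase_of_mem hkB, hBcard]
        omega
      · exact Finset.mem_insert_self _ _
      · intro hkmem
        rcases Finset.mem_insert.mp hkmem with h | h
        · exact hjk h.symm
        · exact (Finset.notMem_erase k B) h
    · intro A hA'
      have hmA := Finset.mem_filter.mp hA'
      have hApc := hmA.1
      have hjA := hmA.2.1
      have hkA := hmA.2.2
      have hAcard : A.card = b := hcard hApc
      have hkAe : k ∉ A.erase j := fun h => hkA (Finset.mem_of_mem_erase h)
      have hb : 0 < b := by rw [← hAcard]; exact Finset.card_pos.mpr ⟨j, hjA⟩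
      refine Finset.mem_filter.mpr ⟨Finset.mem_powersetCard.mpr ⟨Finset.subset_univ _, ?_⟩, ?_, ?_⟩
      · rw [Finset.card_insert_of_notMem hkAe, Finset.card_erase_of_mem hjA, hAcard]
        omega
      · intro hjmem
        rcases Finset.mem_insert.mp hjmem with h | h
        · exact hjk h
        · exact (Finset.notMem_erase j A) h
      · exact Finset.mem_insert_self _ _
    · intro B hB
      obtain ⟨hjB, hkB⟩ := (Finset.mem_filter.mp hB).2
      rw [Finset.erase_insert (fun h => hjB (Finset.mem_of_mem_erase h)),
        Finset.insert_erase hkB]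
    · intro A hA'
      obtain ⟨hjA, hkA⟩ := (Finset.mem_filter.mp hA').2
      rw [Finset.erase_insert (fun h => hkA (Finset.mem_of_mem_erase h)),
        Finset.insert_erase hjA]
    · intro B hB
      obtain ⟨hjB, hkB⟩ := (Finset.mem_filter.mp hB).2
      rw [Finset.erase_insert (fun h => hjB (Finset.mem_of_mem_erase h)),
        Finset.insert_erase hkB]
  -- main decomposition
  have hdecomp : ∀ z : ℂ, (z - w k) * Zsum c a b tb sb yb (Function.update w j z)
      = (∑ A ∈ pc.filter (fun A => j ∈ A ∧ k ∈ A),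
          (z - w k) * Tt c a b tb sb yb (Function.update w j z) A)
        + (∑ A ∈ pc.filter (fun A => ¬ j ∈ A ∧ ¬ k ∈ A),
          (z - w k) * Tt c a b tb sb yb (Function.update w j z) A)
        + ∑ A ∈ pc.filter (fun A => j ∈ A ∧ ¬ k ∈ A),
          (z - w k) * (Tt c a b tb sb yb (Function.update w j z) A
            + Tt c a b tb sb yb (Function.update w j z) (insert k (A.erase j))) := by
    intro z
    rw [Zsum_eq, Finset.mul_sum, ← hpc,
      hsplit (fun A => (z - w k) * Tt c a b tb sb yb (Function.update w j z) A), hpair z]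
    have hmerge : ∑ A ∈ pc.filter (fun A => j ∈ A ∧ ¬ k ∈ A),
        (z - w k) * (Tt c a b tb sb yb (Function.update w j z) A
          + Tt c a b tb sb yb (Function.update w j z) (insert k (A.erase j)))
        = (∑ A ∈ pc.filter (fun A => j ∈ A ∧ ¬ k ∈ A),
            (z - w k) * Tt c a b tb sb yb (Function.update w j z) A)
          + ∑ A ∈ pc.filter (fun A => j ∈ A ∧ ¬ k ∈ A),
            (z - w k) * Tt c a b tb sb yb (Function.update w j z) (insert k (A.erase j)) := by
      rw [← Finset.sum_add_distrib]
      exact Finset.sum_congr rfl (fun A _ => by ring)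
    rw [hmerge]
    ring
  simp only [hdecomp]
  have t1 : Tendsto (fun z => ∑ A ∈ pc.filter (fun A => j ∈ A ∧ k ∈ A),
      (z - w k) * Tt c a b tb sb yb (Function.update w j z) A) (𝓝[≠] (w k)) (𝓝 0) := by
    have key : ∀ A ∈ pc.filter (fun A => j ∈ A ∧ k ∈ A),
        Tendsto (fun z => (z - w k) * Tt c a b tb sb yb (Function.update w j z) A)
          (𝓝[≠] (w k)) (𝓝 (0 : ℂ)) := by
      intro A hA'
      have hm := Finset.mem_filter.mp hA'
      exact caseS1 c tb sb yb w j k hjk hw hws hwy A (hcard hm.1) hm.2.1 hm.2.2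
    have := tendsto_finset_sum (pc.filter (fun A => j ∈ A ∧ k ∈ A)) key
    simpa using this
  have t2 : Tendsto (fun z => ∑ A ∈ pc.filter (fun A => ¬ j ∈ A ∧ ¬ k ∈ A),
      (z - w k) * Tt c a b tb sb yb (Function.update w j z) A) (𝓝[≠] (w k)) (𝓝 0) := by
    have key : ∀ A ∈ pc.filter (fun A => ¬ j ∈ A ∧ ¬ k ∈ A),
        Tendsto (fun z => (z - w k) * Tt c a b tb sb yb (Function.update w j z) A)
          (𝓝[≠] (w k)) (𝓝 (0 : ℂ)) := by
      intro A hA'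
      have hm := Finset.mem_filter.mp hA'
      exact caseS2 c tb sb yb w j k hjk hw hwt A (hcard hm.1) hm.2.1 hm.2.2
    have := tendsto_finset_sum (pc.filter (fun A => ¬ j ∈ A ∧ ¬ k ∈ A)) key
    simpa using this
  have t3 : Tendsto (fun z => ∑ A ∈ pc.filter (fun A => j ∈ A ∧ ¬ k ∈ A),
      (z - w k) * (Tt c a b tb sb yb (Function.update w j z) A
        + Tt c a b tb sb yb (Function.update w j z) (insert k (A.erase j)))) (𝓝[≠] (w k))
      (𝓝 0) := by
    have key : ∀ A ∈ pc.filter (fun A => j ∈ A ∧ ¬ k ∈ A),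
        Tendsto (fun z => (z - w k) * (Tt c a b tb sb yb (Function.update w j z) A
          + Tt c a b tb sb yb (Function.update w j z) (insert k (A.erase j))))
          (𝓝[≠] (w k)) (𝓝 (0 : ℂ)) := by
      intro A hA'
      have hm := Finset.mem_filter.mp hA'
      exact caseS3 c tb sb yb w j k hjk hw hwt hws hwy A (hcard hm.1) hm.2.1 hm.2.2
    have := tendsto_finset_sum (pc.filter (fun A => j ∈ A ∧ ¬ k ∈ A)) key
    simpa using this
  have := (t1.add t2).add t3
  simpa using this
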